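/- Let 0 < δ < α < 1 and n ≥ 1 with k := ⌈(n+1)(1-α+δ)⌉ ≤ n. Let S_1, …, S_n, S' be real random variables whose joint law is exchangeable, and let s̃_1, …, s̃_n be real random variables on the same probability space such that P(S_i ≤ s̃_i for every i ∈ {1, …, n}) ≥ 1 - δ. Let s* be the k-th order statistic of (s̃_1, …, s̃_n). Then P(S' ≤ s*) ≥ 1 - α. -/

import Mathlib

open MeasureTheory

/-- The `k`-th order statistic (1-indexed, counting multiplicity) of a tuple of reals,
with junk value `0` if `k` is out of range. -/
noncomputable def orderStat {n : ℕ} (p : Fin n → ℝ) (k : ℕ) : ℝ :=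
  (Multiset.sort (Multiset.map p Finset.univ.val) (· ≤ ·)).getD (k - 1) 0

/-!
Call `rank y j` the number of coordinates of `y` strictly below `y j`. For any
`y : Fin (n + 1) → ℝ` and `k ≤ n + 1`, at least `k` indices have rank `< k` (all those with `y j`
at most the `k`-th order statistic). By exchangeability every index has the same probability of
rank `< k`, so `P(rank S' < k) ≥ k / (n + 1) ≥ 1 - α + δ`. On this event fewer than `k` of the
`S_i` lie below `S'`, and on the event `∀ i, S_i ≤ s̃_i` even fewer `s̃_i` do, so `S' ≤ s*`.
Intersecting the two events costs at most `δ + (α - δ) = α`.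
-/

open Finset
open scoped ENNReal

namespace List

variable {α : Type*} [LinearOrder α] {l : List α} {j : ℕ}

theorem Pairwise.countP_lt_getElem_le (hl : l.Pairwise (· ≤ ·)) (hj : j < l.length) :
    l.countP (· < l[j]) ≤ j := by
  have hdrop : ∀ b ∈ l.drop j, ¬ b < l[j] := by
    have hpw := hl.drop (i := j)
    rw [drop_eq_getElem_cons hj, pairwise_cons] at hpw
    rw [drop_eq_getElem_cons hj]
    rintro b (_ | ⟨_, hb⟩)
    exacts [lt_irrefl _, not_lt.mpr (hpw.1 b hb)]
  calc l.countP (· < l[j])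
      = (l.take j).countP (· < l[j]) + (l.drop j).countP (· < l[j]) := by
        rw [← countP_append, take_append_drop]
    _ = (l.take j).countP (· < l[j]) := by
        rw [(countP_eq_zero (l := l.drop j)).mpr (by simpa using hdrop), add_zero]
    _ ≤ j := countP_le_length.trans (length_take_le _ _)

theorem Pairwise.lt_countP_le_getElem (hl : l.Pairwise (· ≤ ·)) (hj : j < l.length) :
    j < l.countP (· ≤ l[j]) := by
  have htake : ∀ b ∈ l.take (j + 1), b ≤ l[j] := by
    have hpw := hl.take (i := j + 1)
    rw [← take_concat_get hj, concat_eq_append, pairwise_append] at hpw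
    rw [← take_concat_get hj, concat_eq_append]
    intro b hb
    rcases mem_append.mp hb with hb | hb
    · exact hpw.2.2 b hb _ (mem_singleton_self _)
    · rw [mem_singleton.mp hb]
  refine lt_of_lt_of_le ?_ (take_sublist (j + 1) l).countP_le
  rw [countP_eq_length.mpr (by simpa using htake), length_take]
  omega

end List

section OrderStatistic

variable {n k : ℕ} {p : Fin n → ℝ}

theorem countP_sort_map_univ (p : Fin n → ℝ) (q : ℝ → Prop) [DecidablePred q] :
    (Multiset.sort (Multiset.map p univ.val) (· ≤ ·)).countP q = #{i | q (p i)} := by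
  rw [← Multiset.coe_countP, Multiset.sort_eq, Multiset.countP_map]
  rfl

theorem exists_orderStat_eq_getElem (hk : 1 ≤ k) (hkn : k ≤ n) :
    ∃ h, orderStat p k = (Multiset.sort (Multiset.map p univ.val) (· ≤ ·))[k - 1]'h :=
  ⟨by simp; omega, List.getD_eq_getElem _ _ _⟩

theorem card_filter_lt_orderStat (hk : 1 ≤ k) (hkn : k ≤ n) :
    #{i | p i < orderStat p k} < k := by
  obtain ⟨hlen, heq⟩ := exists_orderStat_eq_getElem (p := p) hk hkn
  have := (Multiset.pairwise_sort _ _).countP_lt_getElem_le hlen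
  rw [← heq, countP_sort_map_univ] at this
  omega

theorem le_card_filter_le_orderStat (hk : 1 ≤ k) (hkn : k ≤ n) :
    k ≤ #{i | p i ≤ orderStat p k} := by
  obtain ⟨hlen, heq⟩ := exists_orderStat_eq_getElem (p := p) hk hkn
  have := (Multiset.pairwise_sort _ _).lt_countP_le_getElem hlen
  rw [← heq, countP_sort_map_univ] at this
  omega

theorem le_orderStat_of_card_filter_lt {x : ℝ} (hkn : k ≤ n) (h : #{i | p i < x} < k) :
    x ≤ orderStat p k := by
  by_contra! hlt
  have := (le_card_filter_le_orderStat (p := p) (by omega) hkn).trans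
    (card_le_card (monotone_filter_right _ fun _ _ hi => hi.trans_lt hlt))
  omega

end OrderStatistic

section Rank

variable {m : ℕ}

noncomputable def rank (y : Fin m → ℝ) (j : Fin m) : ℕ := #{i | y i < y j}

theorem rank_comp_perm (y : Fin m → ℝ) (σ : Equiv.Perm (Fin m)) (j : Fin m) :
    rank (y ∘ σ) j = rank y (σ j) := by
  simp only [rank, card_filter, Function.comp_apply]
  exact Equiv.sum_comp σ (fun i => if y i < y (σ j) then 1 else 0)

theorem measurable_rank (j : Fin m) : Measurable fun y : Fin m → ℝ => rank y j := by
  simp only [rank, card_filter]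
  exact Finset.measurable_sum _ fun i _ => Measurable.ite
    (measurableSet_lt (measurable_pi_apply i) (measurable_pi_apply j)) measurable_const
    measurable_const

theorem le_card_filter_rank_lt (y : Fin m → ℝ) {k : ℕ} (hkm : k ≤ m) :
    k ≤ #{j | rank y j < k} := by
  rcases Nat.eq_zero_or_pos k with rfl | hk
  · exact Nat.zero_le _
  refine (le_card_filter_le_orderStat (p := y) hk hkm).trans
    (card_le_card (monotone_filter_right _ fun j _ hj => ?_))
  calc rank y j ≤ #{i | y i < orderStat y k} :=
        card_le_card (monotone_filter_right _ fun _ _ hi => hi.trans_le hj)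
    _ < k := card_filter_lt_orderStat hk hkm

theorem card_filter_lt_le_rank_last {n : ℕ} {y : Fin (n + 1) → ℝ} {s : Fin n → ℝ}
    (h : ∀ i, y i.castSucc ≤ s i) : #{i | s i < y (Fin.last n)} ≤ rank y (Fin.last n) :=
  calc #{i | s i < y (Fin.last n)} ≤ #{i : Fin n | y i.castSucc < y (Fin.last n)} :=
        card_le_card (monotone_filter_right _ fun i _ hi => (h i).trans_lt hi)
    _ ≤ rank y (Fin.last n) :=
        card_le_card_of_injOn Fin.castSucc (fun i hi => by simpa using hi)
          (Fin.castSucc_injective n).injOn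

end Rank

section Exchangeable

variable {Ω : Type*} [MeasurableSpace Ω] {μ : Measure Ω} {m : ℕ} {Y : Ω → Fin m → ℝ}

theorem measure_rank_lt_eq (hY : Measurable Y)
    (hexch : ∀ σ : Equiv.Perm (Fin m), μ.map (fun ω i => Y ω (σ i)) = μ.map Y) (k : ℕ)
    (j j' : Fin m) : μ {ω | rank (Y ω) j < k} = μ {ω | rank (Y ω) j' < k} := by
  set σ := Equiv.swap j' j
  have hB : MeasurableSet {y : Fin m → ℝ | rank y j' < k} :=
    measurableSet_lt (measurable_rank j') measurable_const
  have hYσ : Measurable fun ω i => Y ω (σ i) := by fun_prop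
  have hpre : {ω | rank (Y ω) j < k} = (fun ω i => Y ω (σ i)) ⁻¹' {y | rank y j' < k} := by
    ext ω
    rw [Set.mem_preimage, Set.mem_ofPred, Set.mem_ofPred, ← Function.comp_def, rank_comp_perm,
      Equiv.swap_apply_left]
  rw [hpre, ← Measure.map_apply hYσ hB, hexch, Measure.map_apply hY hB]
  rfl

theorem nat_mul_measure_univ_le_sum {ι : Type*} [Fintype ι] {E : ι → Set Ω}
    [∀ i, DecidablePred (· ∈ E i)] (hE : ∀ i, MeasurableSet (E i)) {c : ℕ}
    (hc : ∀ ω, c ≤ #{i | ω ∈ E i}) :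
    c * μ Set.univ ≤ ∑ i, μ (E i) := by
  calc c * μ Set.univ = ∫⁻ _, (c : ℝ≥0∞) ∂μ := by rw [lintegral_const]
    _ ≤ ∫⁻ ω, ∑ i, (E i).indicator 1 ω ∂μ := lintegral_mono fun ω => by
        simp only [Set.indicator_apply, Pi.one_apply, sum_boole]
        exact_mod_cast hc ω
    _ = ∑ i, μ (E i) := by
        rw [lintegral_finsetSum _ fun i _ => measurable_one.indicator (hE i)]
        simp only [lintegral_indicator_one (hE _)]

theorem le_mul_measureReal_rank_lt [IsProbabilityMeasure μ] (hY : Measurable Y)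
    (hexch : ∀ σ : Equiv.Perm (Fin m), μ.map (fun ω i => Y ω (σ i)) = μ.map Y) {k : ℕ}
    (hkm : k ≤ m) (j : Fin m) : (k : ℝ) ≤ m * μ.real {ω | rank (Y ω) j < k} := by
  have hE : ∀ i, MeasurableSet {ω | rank (Y ω) i < k} := fun i =>
    measurableSet_lt ((measurable_rank i).comp hY) measurable_const
  have h := nat_mul_measure_univ_le_sum (μ := μ) hE fun ω => le_card_filter_rank_lt (Y ω) hkm
  simp only [measure_univ, mul_one, measure_rank_lt_eq hY hexch k _ j, sum_const, card_univ,
    Fintype.card_fin, nsmul_eq_mul] at h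
  have := ENNReal.toReal_mono (by finiteness) h
  simpa [ENNReal.toReal_mul, measureReal_def] using this

end Exchangeable

theorem stmt10_general (n : ℕ) (α δ : ℝ)
    (k : ℕ) (hk : k = ⌈((n : ℝ) + 1) * (1 - α + δ)⌉₊) (hkn : k ≤ n)
    {Ω : Type*} [MeasurableSpace Ω] (μ : Measure Ω) [IsProbabilityMeasure μ]
    (Y : Ω → Fin (n + 1) → ℝ) (hY : Measurable Y)
    (hexch : ∀ π : Equiv.Perm (Fin (n + 1)),
      Measure.map (fun ω i => Y ω (π i)) μ = Measure.map Y μ)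
    (stilde : Ω → Fin n → ℝ)
    (hbound : 1 - δ
      ≤ (μ {ω | ∀ i : Fin n, Y ω (Fin.castSucc i) ≤ stilde ω i}).toReal) :
    1 - α ≤ (μ {ω | Y ω (Fin.last n) ≤ orderStat (stilde ω) k}).toReal := by
  set A := {ω | ∀ i : Fin n, Y ω (Fin.castSucc i) ≤ stilde ω i}
  set E := {ω | rank (Y ω) (Fin.last n) < k}
  have hEmeas : MeasurableSet E := measurableSet_lt ((measurable_rank _).comp hY) measurable_const
  have hE : 1 - α + δ ≤ μ.real E := by
    have hcount := le_mul_measureReal_rank_lt hY hexch (hkn.trans n.le_succ) (Fin.last n)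
    have hceil : ((n : ℝ) + 1) * (1 - α + δ) ≤ k := hk ▸ Nat.le_ceil _
    push_cast at hcount
    exact le_of_mul_le_mul_left (hceil.trans hcount) (by positivity)
  have hAE : A ∩ E ⊆ {ω | Y ω (Fin.last n) ≤ orderStat (stilde ω) k} :=
    fun ω ⟨hωA, hωE⟩ =>
      le_orderStat_of_card_filter_lt hkn ((card_filter_lt_le_rank_last hωA).trans_lt hωE)
  calc 1 - α ≤ μ.real A + μ.real E - μ.real (A ∪ E) := by
        linarith [measureReal_le_one (μ := μ) (s := A ∪ E), measureReal_def μ A]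
    _ = μ.real (A ∩ E) := by rw [← measureReal_union_add_inter (s := A) hEmeas]; ring
    _ ≤ _ := measureReal_mono hAE

/-- Validity of TCPR: if `S_1, …, S_n, S'` (encoded as the coordinates of
`Y : Ω → Fin (n+1) → ℝ`, with `S'` the last coordinate) are exchangeable, the proxy
scores `s̃_i` satisfy `P(∀ i, S_i ≤ s̃_i) ≥ 1 - δ`, and `s*` is the `k`-th order
statistic of `(s̃_1, …, s̃_n)` with `k = ⌈(n+1)(1-α+δ)⌉ ≤ n`, then
`P(S' ≤ s*) ≥ 1 - α`. -/
theorem stmt10 (n : ℕ) (hn : 1 ≤ n) (α δ : ℝ) (hδ0 : 0 < δ) (hδα : δ < α) (hα1 : α < 1)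
    (k : ℕ) (hk : k = ⌈((n : ℝ) + 1) * (1 - α + δ)⌉₊) (hkn : k ≤ n)
    {Ω : Type*} [MeasurableSpace Ω] (μ : Measure Ω) [IsProbabilityMeasure μ]
    (Y : Ω → Fin (n + 1) → ℝ) (hY : Measurable Y)
    (hexch : ∀ π : Equiv.Perm (Fin (n + 1)),
      Measure.map (fun ω i => Y ω (π i)) μ = Measure.map Y μ)
    (stilde : Ω → Fin n → ℝ) (hstilde : Measurable stilde)
    (hbound : 1 - δ
      ≤ (μ {ω | ∀ i : Fin n, Y ω (Fin.castSucc i) ≤ stilde ω i}).toReal) :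
    1 - α ≤ (μ {ω | Y ω (Fin.last n) ≤ orderStat (stilde ω) k}).toReal :=
  stmt10_general n α δ k hk hkn μ Y hY hexch stilde hbound
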